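/- For odd T, the distribution Π⁽¹⁾ on the staggered adoption set defined by Π⁽¹⁾(w_{(T)}) = (T+1)²/(4T²), Π⁽¹⁾(w_{(0)}) = (T²-1)/(4T²), and Π⁽¹⁾(w_{(j)}) = I(j odd)/T for j = 1,...,T-1, is a probability distribution (all masses nonnegative summing to 1) and solves the DATE equation with equal weights ξ = 1_T/T. -/

import Mathlib

open Finset

/-- The indicator vector in `ℝ^T` of a binary assignment path `w ∈ {0,1}^T`. -/
noncomputable def vecOf (T : ℕ) (w : Fin T → Bool) : Fin T → ℝ :=
  fun t => if w t then 1 else 0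

/-- The centering matrix `J = I_T - (1/T)·1_T·1_T^⊤`. -/
noncomputable def Jmat (T : ℕ) : Matrix (Fin T) (Fin T) ℝ :=
  fun i j => (if i = j then (1 : ℝ) else 0) - 1 / (T : ℝ)

/-- The mean assignment vector `E_{W ~ Π}[W]`. -/
noncomputable def EW (T : ℕ) (P : (Fin T → Bool) → ℝ) : Fin T → ℝ :=
  fun t => ∑ w : Fin T → Bool, P w * vecOf T w t

/-- `J (W - E[W])` for a given path `w`. -/
noncomputable def Jc (T : ℕ) (P : (Fin T → Bool) → ℝ) (w : Fin T → Bool) : Fin T → ℝ :=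
  (Jmat T).mulVec (fun t => vecOf T w t - EW T P t)

/-- The DATE equation: `E_{W~Π}[(diag(W) - ξ W^⊤) J (W - E[W])] = 0` as a vector
equation in `ℝ^T`; the `j`-th row of `(diag(W) - ξ W^⊤) J (W - E[W])` is
`W_j (J(W-E[W]))_j - ξ_j · W^⊤ J (W - E[W])`. -/
noncomputable def DATEeq (T : ℕ) (P : (Fin T → Bool) → ℝ) (ξ : Fin T → ℝ) : Prop :=
  ∀ j : Fin T,
    ∑ w : Fin T → Bool,
      P w * (vecOf T w j * Jc T P w j
        - ξ j * ∑ i : Fin T, vecOf T w i * Jc T P w i) = 0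

/-- The staggered-adoption assignment `w_{(j)} ∈ {0,1}^T`: the last `j` entries are
`1` and the first `T - j` entries are `0`. -/
def stag (T j : ℕ) : Fin T → Bool := fun t => decide (T - j ≤ (t : ℕ))

/-- The probability distribution on `{0,1}^T` supported on the staggered-adoption
set `{w_{(0)}, …, w_{(T)}}` with mass `m j` on `w_{(j)}`. -/
noncomputable def stagDist (T : ℕ) (m : ℕ → ℝ) : (Fin T → Bool) → ℝ :=
  fun w => ∑ j ∈ Finset.range (T + 1), if w = stag T j then m j else 0

/-- Masses for odd `T`: `(T+1)²/(4T²)` on `w_{(T)}`, `(T²-1)/(4T²)` on `w_{(0)}`,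
and `1/T` on `w_{(j)}` for odd `j`, `1 ≤ j ≤ T-1`. -/
noncomputable def mOdd (T : ℕ) : ℕ → ℝ := fun j =>
  if j = T then ((T : ℝ) + 1) ^ 2 / (4 * (T : ℝ) ^ 2)
  else if j = 0 then ((T : ℝ) ^ 2 - 1) / (4 * (T : ℝ) ^ 2)
  else if Odd j then 1 / (T : ℝ) else 0

private lemma oddsum1 (n : ℕ) : ∑ k ∈ range n, (if Odd k then (1:ℝ) else 0) = ((n/2 : ℕ) : ℝ) := by
  induction n with
  | zero => simp
  | succ n ih =>
    rw [Finset.sum_range_succ, ih]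
    rcases Nat.even_or_odd n with ⟨a, rfl⟩ | ⟨a, rfl⟩
    · rw [if_neg (by rw [Nat.odd_iff]; omega)]
      have : (a+a+1)/2 = (a+a)/2 := by omega
      rw [this, add_zero]
    · rw [if_pos ⟨a, rfl⟩]
      have h1 : (2*a+1)/2 = a := by omega
      have h2 : (2*a+1+1)/2 = a+1 := by omega
      rw [h1, h2]; push_cast; ring

private lemma oddsumk (n : ℕ) : ∑ k ∈ range n, (if Odd k then (k:ℝ) else 0) = ((n/2 : ℕ) : ℝ)^2 := by
  induction n with
  | zero => simp
  | succ n ih =>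
    rw [Finset.sum_range_succ, ih]
    rcases Nat.even_or_odd n with ⟨a, rfl⟩ | ⟨a, rfl⟩
    · rw [if_neg (by rw [Nat.odd_iff]; omega)]
      have : (a+a+1)/2 = (a+a)/2 := by omega
      rw [this, add_zero]
    · rw [if_pos ⟨a, rfl⟩]
      have h1 : (2*a+1)/2 = a := by omega
      have h2 : (2*a+1+1)/2 = a+1 := by omega
      rw [h1, h2]; push_cast; ring

private lemma oddsumk2 (n : ℕ) : ∑ k ∈ range n, (if Odd k then (k:ℝ)^2 else 0)
    = ((n/2 : ℕ) : ℝ) * (2*((n/2 : ℕ) : ℝ) - 1) * (2*((n/2 : ℕ) : ℝ) + 1) / 3 := by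
  induction n with
  | zero => simp
  | succ n ih =>
    rw [Finset.sum_range_succ, ih]
    rcases Nat.even_or_odd n with ⟨a, rfl⟩ | ⟨a, rfl⟩
    · rw [if_neg (by rw [Nat.odd_iff]; omega)]
      have : (a+a+1)/2 = (a+a)/2 := by omega
      rw [this, add_zero]
    · rw [if_pos ⟨a, rfl⟩]
      have h1 : (2*a+1)/2 = a := by omega
      have h2 : (2*a+1+1)/2 = a+1 := by omega
      rw [h1, h2]; push_cast; ring

private lemma halfsum (n : ℕ) : ∑ j ∈ range n, (((j+1)/2 : ℕ) : ℝ)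
    = (((n+1)/2 : ℕ) : ℝ) * ((n/2 : ℕ) : ℝ) := by
  induction n with
  | zero => simp
  | succ n ih =>
    rw [Finset.sum_range_succ, ih]
    rcases Nat.even_or_odd n with ⟨a, rfl⟩ | ⟨a, rfl⟩
    · have h1 : (a+a+1)/2 = (a+a)/2 := by omega
      have h2 : (a+a)/2 = a := by omega
      have h3 : (a+a+1+1)/2 = a+1 := by omega
      rw [h1, h2, h3]; push_cast; ring
    · have h1 : (2*a+1)/2 = a := by omega
      have h2 : (2*a+1+1)/2 = a+1 := by omega
      have h3 : (2*a+1+1+1)/2 = a+1 := by omega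
      rw [h1, h2, h3]; push_cast; ring

private lemma sum_ite_lt (f : ℕ → ℝ) {k n : ℕ} (h : k ≤ n) :
    ∑ j ∈ range n, (if j < k then f j else 0) = ∑ j ∈ range k, f j := by
  rw [Finset.range_eq_Ico,
    ← Finset.sum_Ico_consecutive (fun j => if j < k then f j else 0) (Nat.zero_le k) h]
  have h2 : ∑ j ∈ Finset.Ico k n, (if j < k then f j else 0) = 0 :=
    Finset.sum_eq_zero (fun j hj => by
      rw [Finset.mem_Ico] at hj; rw [if_neg (by omega)])
  rw [h2, add_zero, ← Finset.range_eq_Ico]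
  exact Finset.sum_congr rfl (fun j hj => by
    rw [Finset.mem_range] at hj; rw [if_pos hj])

private lemma sum_ite_ge (f : ℕ → ℝ) {a n : ℕ} (h : a ≤ n) :
    ∑ j ∈ range n, (if a ≤ j then f j else 0)
      = ∑ j ∈ range n, f j - ∑ j ∈ range a, f j := by
  calc ∑ j ∈ range n, (if a ≤ j then f j else 0)
      = ∑ j ∈ range n, (f j - (if j < a then f j else 0)) := by
        refine Finset.sum_congr rfl (fun j _ => ?_)
        rcases lt_or_ge j a with hj | hj
        · rw [if_neg (by omega), if_pos hj]; ring
        · rw [if_pos hj, if_neg (by omega)]; ring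
    _ = ∑ j ∈ range n, f j - ∑ j ∈ range a, f j := by
        rw [Finset.sum_sub_distrib, sum_ite_lt f h]

private lemma sum_reflect (g : ℕ → ℝ) (n : ℕ) :
    ∑ i ∈ range n, g (n - i) = ∑ j ∈ range n, g (j+1) := by
  rw [← Finset.sum_range_reflect (fun j => g (j+1)) n]
  exact Finset.sum_congr rfl (fun i hi => by
    rw [Finset.mem_range] at hi; congr 1; omega)

private lemma sum_reflect_ite (g : ℕ → ℝ) {a n : ℕ} (h : a ≤ n) :
    ∑ i ∈ range n, (if n - a ≤ i then g (n - i) else 0) = ∑ j ∈ range a, g (j+1) := by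
  have step1 : ∑ i ∈ range n, (if n - a ≤ i then g (n - i) else 0)
      = ∑ i ∈ range n, (fun m => if m ≤ a then g m else 0) (n - i) := by
    refine Finset.sum_congr rfl (fun i hi => ?_)
    rw [Finset.mem_range] at hi
    exact if_congr (by omega) rfl rfl
  rw [step1, sum_reflect (fun m => if m ≤ a then g m else 0) n]
  have step2 : ∑ j ∈ range n, (if j+1 ≤ a then g (j+1) else 0)
      = ∑ j ∈ range n, (if j < a then g (j+1) else 0) := rfl
  rw [step2, sum_ite_lt (fun j => g (j+1)) h]

private lemma sum_cube (T : ℕ) (m : ℕ → ℝ) (f : (Fin T → Bool) → ℝ) :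
    ∑ w : Fin T → Bool, stagDist T m w * f w
      = ∑ j ∈ range (T+1), m j * f (stag T j) := by
  unfold stagDist
  calc ∑ w : Fin T → Bool, (∑ j ∈ range (T+1), if w = stag T j then m j else 0) * f w
      = ∑ w : Fin T → Bool, ∑ j ∈ range (T+1), (if w = stag T j then m j * f w else 0) := by
        refine Finset.sum_congr rfl (fun w _ => ?_)
        rw [Finset.sum_mul]
        exact Finset.sum_congr rfl (fun j _ => by split_ifs <;> ring)
    _ = ∑ j ∈ range (T+1), ∑ w : Fin T → Bool, (if w = stag T j then m j * f w else 0) :=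
        Finset.sum_comm
    _ = ∑ j ∈ range (T+1), m j * f (stag T j) := by
        refine Finset.sum_congr rfl (fun j _ => ?_)
        rw [Finset.sum_ite_eq' Finset.univ (stag T j) (fun w => m j * f w)]
        simp

private lemma vecOf_stag (T k : ℕ) (i : Fin T) :
    vecOf T (stag T k) i = if T - k ≤ (i : ℕ) then 1 else 0 := by
  simp [vecOf, stag]

private lemma Jc_eq (T : ℕ) (P : (Fin T → Bool) → ℝ) (w : Fin T → Bool) (t : Fin T) :
    Jc T P w t = (vecOf T w t - EW T P t)
      - (∑ i : Fin T, (vecOf T w i - EW T P i)) / T := by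
  unfold Jc Jmat
  delta Matrix.mulVec
  show (∑ i : Fin T, ((if t = i then (1:ℝ) else 0) - 1/T) * (vecOf T w i - EW T P i)) = _
  calc ∑ i : Fin T, ((if t = i then (1:ℝ) else 0) - 1/T) * (vecOf T w i - EW T P i)
      = ∑ i : Fin T, ((if t = i then (vecOf T w i - EW T P i) else 0)
          - (vecOf T w i - EW T P i)/T) := by
        refine Finset.sum_congr rfl (fun i _ => ?_)
        split_ifs <;> ring
    _ = _ := by
        rw [Finset.sum_sub_distrib, Finset.sum_ite_eq Finset.univ t
          (fun i => vecOf T w i - EW T P i), ← Finset.sum_div]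
        simp

private lemma mOdd_lt {T j : ℕ} (hj : j < T) :
    mOdd T j = (if j = 0 then ((T:ℝ)^2 - 1)/(4*(T:ℝ)^2) else 0)
      + (if Odd j then 1/(T:ℝ) else 0) := by
  unfold mOdd
  rw [if_neg (by omega)]
  rcases eq_or_ne j 0 with rfl | h0
  · rw [if_pos rfl, if_pos rfl, if_neg (by simp), add_zero]
  · rw [if_neg h0, if_neg h0, zero_add]

private lemma mOdd_self (T : ℕ) : mOdd T T = ((T:ℝ)+1)^2/(4*(T:ℝ)^2) := by
  unfold mOdd; rw [if_pos rfl]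

private lemma sum_mOdd {T n : ℕ} (h1 : 1 ≤ n) (h2 : n ≤ T) :
    ∑ j ∈ range n, mOdd T j
      = ((T:ℝ)^2 - 1)/(4*(T:ℝ)^2) + ((n/2 : ℕ):ℝ)/T := by
  have step : ∑ j ∈ range n, mOdd T j
      = ∑ j ∈ range n, ((if j = 0 then ((T:ℝ)^2 - 1)/(4*(T:ℝ)^2) else 0)
          + (if Odd j then 1/(T:ℝ) else 0)) :=
    Finset.sum_congr rfl (fun j hj => mOdd_lt (by rw [Finset.mem_range] at hj; omega))
  rw [step, Finset.sum_add_distrib]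
  have e1 : ∑ j ∈ range n, (if j = 0 then ((T:ℝ)^2 - 1)/(4*(T:ℝ)^2) else 0)
      = ((T:ℝ)^2 - 1)/(4*(T:ℝ)^2) := by
    rw [Finset.sum_ite_eq' (range n) 0 (fun _ => ((T:ℝ)^2 - 1)/(4*(T:ℝ)^2)),
      if_pos (Finset.mem_range.mpr (by omega))]
  have e2 : ∑ j ∈ range n, (if Odd j then 1/(T:ℝ) else 0)
      = ((n/2 : ℕ):ℝ)/T := by
    calc ∑ j ∈ range n, (if Odd j then 1/(T:ℝ) else 0)
        = ∑ j ∈ range n, (if Odd j then (1:ℝ) else 0) * (1/T) := by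
          refine Finset.sum_congr rfl (fun j _ => ?_); split_ifs <;> ring
      _ = ((n/2 : ℕ):ℝ)/T := by rw [← Finset.sum_mul, oddsum1]; ring
  rw [e1, e2]

private lemma EW_eq {T : ℕ} (hT : 2 ≤ T) (t : Fin T) :
    EW T (stagDist T (mOdd T)) t
      = ((T:ℝ)+1)^2/(4*(T:ℝ)^2) + ((T/2 : ℕ):ℝ)/T - (((T - (t:ℕ))/2 : ℕ):ℝ)/T := by
  have ht := t.isLt
  unfold EW
  rw [sum_cube T (mOdd T) (fun w => vecOf T w t)]
  have step : ∀ j ∈ range (T+1), mOdd T j * vecOf T (stag T j) t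
      = (if T - (t:ℕ) ≤ j then mOdd T j else 0) := by
    intro j hj
    rw [vecOf_stag]
    by_cases hc : T - j ≤ (t:ℕ)
    · rw [if_pos hc, if_pos (by omega), mul_one]
    · rw [if_neg hc, if_neg (by omega), mul_zero]
  rw [Finset.sum_congr rfl step, sum_ite_ge _ (by omega : T - (t:ℕ) ≤ T + 1),
    Finset.sum_range_succ, sum_mOdd (by omega) le_rfl,
    sum_mOdd (by omega : 1 ≤ T - (t:ℕ)) (by omega), mOdd_self]
  ring

private lemma vecsum {T k : ℕ} (hk : k ≤ T) :
    ∑ i : Fin T, vecOf T (stag T k) i = (k:ℝ) := by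
  have e : ∀ i : Fin T, vecOf T (stag T k) i
      = (fun m : ℕ => if T - k ≤ m then (1:ℝ) else 0) (i : ℕ) := by
    intro i; exact vecOf_stag T k i
  rw [Finset.sum_congr rfl (fun i _ => e i),
    Fin.sum_univ_eq_sum_range (fun m => if T - k ≤ m then (1:ℝ) else 0) T]
  have := sum_reflect_ite (fun _ => (1:ℝ)) hk
  rw [this]
  simp

private lemma sEW {T : ℕ} (hT : 2 ≤ T) :
    ∑ i : Fin T, EW T (stagDist T (mOdd T)) i
      = (T:ℝ) * (((T:ℝ)+1)^2/(4*(T:ℝ)^2) + ((T/2 : ℕ):ℝ)/T)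
        - (((T+1)/2 : ℕ):ℝ) * ((T/2 : ℕ):ℝ)/T := by
  set C : ℝ := ((T:ℝ)+1)^2/(4*(T:ℝ)^2) + ((T/2 : ℕ):ℝ)/T with hC
  calc ∑ i : Fin T, EW T (stagDist T (mOdd T)) i
      = ∑ i : Fin T, (C - (((T - (i:ℕ))/2 : ℕ):ℝ)/T) := by
        refine Finset.sum_congr rfl (fun i _ => ?_)
        rw [EW_eq hT i]; try ring
    _ = ∑ m ∈ range T, (C - (((T - m)/2 : ℕ):ℝ)/T) :=
        Fin.sum_univ_eq_sum_range (fun m => C - (((T - m)/2 : ℕ):ℝ)/T) T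
    _ = ∑ j ∈ range T, (C - (((j+1)/2 : ℕ):ℝ)/T) := by
        have h := sum_reflect (fun l : ℕ => C - ((l/2 : ℕ):ℝ)/T) T
        simpa using h
    _ = (T:ℝ) * C - (((T+1)/2 : ℕ):ℝ) * ((T/2 : ℕ):ℝ)/T := by
        rw [Finset.sum_sub_distrib, ← Finset.sum_div, halfsum T,
          Finset.sum_const, Finset.card_range]
        push_cast
        try ring

private lemma vecmusum {T k : ℕ} (hT : 2 ≤ T) (hk : k ≤ T) :
    ∑ i : Fin T, vecOf T (stag T k) i * EW T (stagDist T (mOdd T)) i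
      = (k:ℝ) * (((T:ℝ)+1)^2/(4*(T:ℝ)^2) + ((T/2 : ℕ):ℝ)/T)
        - (((k+1)/2 : ℕ):ℝ) * ((k/2 : ℕ):ℝ)/T := by
  set C : ℝ := ((T:ℝ)+1)^2/(4*(T:ℝ)^2) + ((T/2 : ℕ):ℝ)/T with hC
  calc ∑ i : Fin T, vecOf T (stag T k) i * EW T (stagDist T (mOdd T)) i
      = ∑ i : Fin T, (if T - k ≤ (i:ℕ) then C - (((T - (i:ℕ))/2 : ℕ):ℝ)/T else 0) := by
        refine Finset.sum_congr rfl (fun i _ => ?_)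
        rw [vecOf_stag, EW_eq hT i]
        by_cases hc : T - k ≤ (i:ℕ)
        · rw [if_pos hc, if_pos hc, one_mul]; try ring
        · rw [if_neg hc, if_neg hc, zero_mul]
    _ = ∑ m ∈ range T, (if T - k ≤ m then C - (((T - m)/2 : ℕ):ℝ)/T else 0) :=
        Fin.sum_univ_eq_sum_range (fun m => if T - k ≤ m then C - (((T - m)/2 : ℕ):ℝ)/T else 0) T
    _ = ∑ j ∈ range k, (C - (((j+1)/2 : ℕ):ℝ)/T) := by
        have h := sum_reflect_ite (fun l : ℕ => C - ((l/2 : ℕ):ℝ)/T) hk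
        simpa using h
    _ = (k:ℝ) * C - (((k+1)/2 : ℕ):ℝ) * ((k/2 : ℕ):ℝ)/T := by
        rw [Finset.sum_sub_distrib, ← Finset.sum_div, halfsum k,
          Finset.sum_const, Finset.card_range]
        push_cast
        try ring

private lemma odd_halves {k : ℕ} (hk : Odd k) :
    (((k+1)/2 : ℕ):ℝ) * ((k/2 : ℕ):ℝ) = ((k:ℝ)^2 - 1)/4 := by
  obtain ⟨a, rfl⟩ := hk
  rw [show (2*a+1+1)/2 = a+1 by omega, show (2*a+1)/2 = a by omega]
  push_cast; ring

private lemma vec_sq (T : ℕ) (w : Fin T → Bool) (i : Fin T) :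
    vecOf T w i * vecOf T w i = vecOf T w i := by
  unfold vecOf; split_ifs <;> ring

private lemma Fval {T : ℕ} (hT : 2 ≤ T) (j : Fin T) {k : ℕ} (hk : k ≤ T) :
    vecOf T (stag T k) j * Jc T (stagDist T (mOdd T)) (stag T k) j
      - 1/(T:ℝ) * ∑ i : Fin T, vecOf T (stag T k) i * Jc T (stagDist T (mOdd T)) (stag T k) i
    = (if T - k ≤ (j:ℕ) then
        (1 - (((T:ℝ)+1)^2/(4*(T:ℝ)^2) + ((T/2 : ℕ):ℝ)/T - (((T - (j:ℕ))/2 : ℕ):ℝ)/T)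
          - ((k:ℝ) - ((T:ℝ) * (((T:ℝ)+1)^2/(4*(T:ℝ)^2) + ((T/2 : ℕ):ℝ)/T)
              - (((T+1)/2 : ℕ):ℝ) * ((T/2 : ℕ):ℝ)/T))/T) else 0)
      - 1/(T:ℝ) * ((k:ℝ)
          - ((k:ℝ) * (((T:ℝ)+1)^2/(4*(T:ℝ)^2) + ((T/2 : ℕ):ℝ)/T)
              - (((k+1)/2 : ℕ):ℝ) * ((k/2 : ℕ):ℝ)/T)
          - (k:ℝ) * ((k:ℝ) - ((T:ℝ) * (((T:ℝ)+1)^2/(4*(T:ℝ)^2) + ((T/2 : ℕ):ℝ)/T)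
              - (((T+1)/2 : ℕ):ℝ) * ((T/2 : ℕ):ℝ)/T))/T) := by
  set P := stagDist T (mOdd T) with hP
  set C : ℝ := ((T:ℝ)+1)^2/(4*(T:ℝ)^2) + ((T/2 : ℕ):ℝ)/T with hC
  set s : ℝ := (T:ℝ) * C - (((T+1)/2 : ℕ):ℝ) * ((T/2 : ℕ):ℝ)/T with hs
  have hD : ∑ i : Fin T, (vecOf T (stag T k) i - EW T P i) = (k:ℝ) - s := by
    rw [Finset.sum_sub_distrib, vecsum hk, sEW hT]
  have hJc : ∀ t : Fin T, Jc T P (stag T k) t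
      = vecOf T (stag T k) t - EW T P t - ((k:ℝ) - s)/T := by
    intro t; rw [Jc_eq, hD]
  have hinner : ∑ i : Fin T, vecOf T (stag T k) i * Jc T P (stag T k) i
      = (k:ℝ) - ((k:ℝ) * C - (((k+1)/2 : ℕ):ℝ) * ((k/2 : ℕ):ℝ)/T)
        - (k:ℝ) * ((k:ℝ) - s)/T := by
    calc ∑ i : Fin T, vecOf T (stag T k) i * Jc T P (stag T k) i
        = ∑ i : Fin T, (vecOf T (stag T k) i - vecOf T (stag T k) i * EW T P i
            - vecOf T (stag T k) i * (((k:ℝ) - s)/T)) := by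
          refine Finset.sum_congr rfl (fun i _ => ?_)
          rw [hJc i, mul_sub, mul_sub, vec_sq]
      _ = _ := by
          rw [Finset.sum_sub_distrib, Finset.sum_sub_distrib, vecsum hk,
            vecmusum hT hk, ← Finset.sum_mul, vecsum hk]
          ring
  rw [hinner, hJc j, EW_eq hT j, vecOf_stag]
  by_cases hc : T - k ≤ (j:ℕ)
  · rw [if_pos hc, if_pos hc]; ring
  · rw [if_neg hc, if_neg hc]; ring

set_option maxHeartbeats 1000000 in
/-- For odd `T`, the distribution `Π⁽¹⁾` on the staggered adoption set is a
probability distribution and solves the DATE equation with equal weights. -/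
theorem stmt9 (T : ℕ) (hT : 2 ≤ T) (hodd : Odd T) :
    (∀ w, 0 ≤ stagDist T (mOdd T) w) ∧
    (∑ w : Fin T → Bool, stagDist T (mOdd T) w) = 1 ∧
    DATEeq T (stagDist T (mOdd T)) (fun _ => 1 / (T : ℝ)) := by
  have hoT : T % 2 = 1 := Nat.odd_iff.mp hodd
  have hT1 : (1:ℝ) ≤ (T:ℝ) := by exact_mod_cast Nat.one_le_cast.mpr (by omega)
  have hTne : (T:ℝ) ≠ 0 := by positivity
  have hmnn : ∀ k, 0 ≤ mOdd T k := by
    intro k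
    unfold mOdd
    split_ifs
    · positivity
    · apply div_nonneg
      · nlinarith
      · positivity
    · positivity
    · exact le_refl 0
  have hT2 : T = 2*(T/2)+1 := by omega
  have h12 : (T+1)/2 = T/2+1 := by omega
  have hx : (T:ℝ) = 2*((T/2 : ℕ):ℝ)+1 := by
    calc (T:ℝ) = ((2*(T/2)+1 : ℕ):ℝ) := by exact_mod_cast congrArg Nat.cast hT2
    _ = 2*((T/2 : ℕ):ℝ)+1 := by push_cast; ring
  have hxnn : (0:ℝ) ≤ ((T/2 : ℕ):ℝ) := Nat.cast_nonneg _
  have hxne : (2*((T/2 : ℕ):ℝ)+1) ≠ 0 := by nlinarith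
  refine ⟨?_, ?_, ?_⟩
  · intro w
    unfold stagDist
    refine Finset.sum_nonneg (fun k _ => ?_)
    split_ifs
    · exact hmnn k
    · exact le_refl 0
  · have h := sum_cube T (mOdd T) (fun _ => (1:ℝ))
    simp only [mul_one] at h
    rw [h, Finset.sum_range_succ, sum_mOdd (by omega) le_rfl, mOdd_self]
    rw [hx]
    push_cast
    field_simp
    ring
  · unfold DATEeq
    intro j
    have hjT := j.isLt
    have key := sum_cube T (mOdd T)
      (fun w => vecOf T w j * Jc T (stagDist T (mOdd T)) w j
        - 1/(T:ℝ) * ∑ i : Fin T, vecOf T w i * Jc T (stagDist T (mOdd T)) w i)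
    simp only at key ⊢
    rw [key]
    have step1 : ∑ k ∈ range (T+1), mOdd T k *
        (vecOf T (stag T k) j * Jc T (stagDist T (mOdd T)) (stag T k) j
          - 1/(T:ℝ) * ∑ i : Fin T, vecOf T (stag T k) i * Jc T (stagDist T (mOdd T)) (stag T k) i)
        = ∑ k ∈ range (T+1), mOdd T k * ((if T - k ≤ (j:ℕ) then
        (1 - (((T:ℝ)+1)^2/(4*(T:ℝ)^2) + ((T/2 : ℕ):ℝ)/T - (((T - (j:ℕ))/2 : ℕ):ℝ)/T)
          - ((k:ℝ) - ((T:ℝ) * (((T:ℝ)+1)^2/(4*(T:ℝ)^2) + ((T/2 : ℕ):ℝ)/T)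
              - (((T+1)/2 : ℕ):ℝ) * ((T/2 : ℕ):ℝ)/T))/T) else 0)
      - 1/(T:ℝ) * ((k:ℝ)
          - ((k:ℝ) * (((T:ℝ)+1)^2/(4*(T:ℝ)^2) + ((T/2 : ℕ):ℝ)/T)
              - (((k+1)/2 : ℕ):ℝ) * ((k/2 : ℕ):ℝ)/T)
          - (k:ℝ) * ((k:ℝ) - ((T:ℝ) * (((T:ℝ)+1)^2/(4*(T:ℝ)^2) + ((T/2 : ℕ):ℝ)/T)
              - (((T+1)/2 : ℕ):ℝ) * ((T/2 : ℕ):ℝ)/T))/T)) := by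
      refine Finset.sum_congr rfl (fun k hk => ?_)
      rw [Fval hT j (by rw [Finset.mem_range] at hk; omega)]
    rw [step1, Finset.sum_range_succ, mOdd_self]
    have step2 : ∑ k ∈ range T, mOdd T k * ((if T - k ≤ (j:ℕ) then
        (1 - (((T:ℝ)+1)^2/(4*(T:ℝ)^2) + ((T/2 : ℕ):ℝ)/T - (((T - (j:ℕ))/2 : ℕ):ℝ)/T)
          - ((k:ℝ) - ((T:ℝ) * (((T:ℝ)+1)^2/(4*(T:ℝ)^2) + ((T/2 : ℕ):ℝ)/T)
              - (((T+1)/2 : ℕ):ℝ) * ((T/2 : ℕ):ℝ)/T))/T) else 0)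
      - 1/(T:ℝ) * ((k:ℝ)
          - ((k:ℝ) * (((T:ℝ)+1)^2/(4*(T:ℝ)^2) + ((T/2 : ℕ):ℝ)/T)
              - (((k+1)/2 : ℕ):ℝ) * ((k/2 : ℕ):ℝ)/T)
          - (k:ℝ) * ((k:ℝ) - ((T:ℝ) * (((T:ℝ)+1)^2/(4*(T:ℝ)^2) + ((T/2 : ℕ):ℝ)/T)
              - (((T+1)/2 : ℕ):ℝ) * ((T/2 : ℕ):ℝ)/T))/T))
        = ∑ k ∈ range T, ((if k = 0 then ((T:ℝ)^2 - 1)/(4*(T:ℝ)^2) * ((if T - k ≤ (j:ℕ) then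
        (1 - (((T:ℝ)+1)^2/(4*(T:ℝ)^2) + ((T/2 : ℕ):ℝ)/T - (((T - (j:ℕ))/2 : ℕ):ℝ)/T)
          - ((k:ℝ) - ((T:ℝ) * (((T:ℝ)+1)^2/(4*(T:ℝ)^2) + ((T/2 : ℕ):ℝ)/T)
              - (((T+1)/2 : ℕ):ℝ) * ((T/2 : ℕ):ℝ)/T))/T) else 0)
      - 1/(T:ℝ) * ((k:ℝ)
          - ((k:ℝ) * (((T:ℝ)+1)^2/(4*(T:ℝ)^2) + ((T/2 : ℕ):ℝ)/T)
              - (((k+1)/2 : ℕ):ℝ) * ((k/2 : ℕ):ℝ)/T)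
          - (k:ℝ) * ((k:ℝ) - ((T:ℝ) * (((T:ℝ)+1)^2/(4*(T:ℝ)^2) + ((T/2 : ℕ):ℝ)/T)
              - (((T+1)/2 : ℕ):ℝ) * ((T/2 : ℕ):ℝ)/T))/T)) else 0)
            + (if Odd k then (1/(T:ℝ)) * ((if T - k ≤ (j:ℕ) then
        (1 - (((T:ℝ)+1)^2/(4*(T:ℝ)^2) + ((T/2 : ℕ):ℝ)/T - (((T - (j:ℕ))/2 : ℕ):ℝ)/T)
          - ((k:ℝ) - ((T:ℝ) * (((T:ℝ)+1)^2/(4*(T:ℝ)^2) + ((T/2 : ℕ):ℝ)/T)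
              - (((T+1)/2 : ℕ):ℝ) * ((T/2 : ℕ):ℝ)/T))/T) else 0)
      - 1/(T:ℝ) * ((k:ℝ)
          - ((k:ℝ) * (((T:ℝ)+1)^2/(4*(T:ℝ)^2) + ((T/2 : ℕ):ℝ)/T)
              - (((k+1)/2 : ℕ):ℝ) * ((k/2 : ℕ):ℝ)/T)
          - (k:ℝ) * ((k:ℝ) - ((T:ℝ) * (((T:ℝ)+1)^2/(4*(T:ℝ)^2) + ((T/2 : ℕ):ℝ)/T)
              - (((T+1)/2 : ℕ):ℝ) * ((T/2 : ℕ):ℝ)/T))/T)) else 0)) := by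
      refine Finset.sum_congr rfl (fun k hk => ?_)
      rw [mOdd_lt (Finset.mem_range.mp hk)]
      split_ifs <;> ring
    rw [step2, Finset.sum_add_distrib]
    rw [Finset.sum_ite_eq' (range T) 0 (fun k => ((T:ℝ)^2 - 1)/(4*(T:ℝ)^2) * ((if T - k ≤ (j:ℕ) then
        (1 - (((T:ℝ)+1)^2/(4*(T:ℝ)^2) + ((T/2 : ℕ):ℝ)/T - (((T - (j:ℕ))/2 : ℕ):ℝ)/T)
          - ((k:ℝ) - ((T:ℝ) * (((T:ℝ)+1)^2/(4*(T:ℝ)^2) + ((T/2 : ℕ):ℝ)/T)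
              - (((T+1)/2 : ℕ):ℝ) * ((T/2 : ℕ):ℝ)/T))/T) else 0)
      - 1/(T:ℝ) * ((k:ℝ)
          - ((k:ℝ) * (((T:ℝ)+1)^2/(4*(T:ℝ)^2) + ((T/2 : ℕ):ℝ)/T)
              - (((k+1)/2 : ℕ):ℝ) * ((k/2 : ℕ):ℝ)/T)
          - (k:ℝ) * ((k:ℝ) - ((T:ℝ) * (((T:ℝ)+1)^2/(4*(T:ℝ)^2) + ((T/2 : ℕ):ℝ)/T)
              - (((T+1)/2 : ℕ):ℝ) * ((T/2 : ℕ):ℝ)/T))/T))),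
      if_pos (Finset.mem_range.mpr (by omega))]
    have step3 : ∑ k ∈ range T, (if Odd k then (1/(T:ℝ)) * ((if T - k ≤ (j:ℕ) then
        (1 - (((T:ℝ)+1)^2/(4*(T:ℝ)^2) + ((T/2 : ℕ):ℝ)/T - (((T - (j:ℕ))/2 : ℕ):ℝ)/T)
          - ((k:ℝ) - ((T:ℝ) * (((T:ℝ)+1)^2/(4*(T:ℝ)^2) + ((T/2 : ℕ):ℝ)/T)
              - (((T+1)/2 : ℕ):ℝ) * ((T/2 : ℕ):ℝ)/T))/T) else 0)
      - 1/(T:ℝ) * ((k:ℝ)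
          - ((k:ℝ) * (((T:ℝ)+1)^2/(4*(T:ℝ)^2) + ((T/2 : ℕ):ℝ)/T)
              - (((k+1)/2 : ℕ):ℝ) * ((k/2 : ℕ):ℝ)/T)
          - (k:ℝ) * ((k:ℝ) - ((T:ℝ) * (((T:ℝ)+1)^2/(4*(T:ℝ)^2) + ((T/2 : ℕ):ℝ)/T)
              - (((T+1)/2 : ℕ):ℝ) * ((T/2 : ℕ):ℝ)/T))/T)) else 0)
        = ∑ k ∈ range T, ((if T - (j:ℕ) ≤ k then (if Odd k then (1/(T:ℝ) * (1 - (((T:ℝ)+1)^2/(4*(T:ℝ)^2) + ((T/2 : ℕ):ℝ)/T - (((T - (j:ℕ))/2 : ℕ):ℝ)/T) - ((k:ℝ) - ((T:ℝ) * (((T:ℝ)+1)^2/(4*(T:ℝ)^2) + ((T/2 : ℕ):ℝ)/T) - (((T+1)/2 : ℕ):ℝ) * ((T/2 : ℕ):ℝ)/T))/T)) else 0) else 0)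
            + (if Odd k then (-(1/(T:ℝ)^2) * ((k:ℝ) - ((k:ℝ) * (((T:ℝ)+1)^2/(4*(T:ℝ)^2) + ((T/2 : ℕ):ℝ)/T) - (((k:ℝ))^2 - 1)/4/T) - (k:ℝ) * ((k:ℝ) - ((T:ℝ) * (((T:ℝ)+1)^2/(4*(T:ℝ)^2) + ((T/2 : ℕ):ℝ)/T) - (((T+1)/2 : ℕ):ℝ) * ((T/2 : ℕ):ℝ)/T))/T)) else 0)) := by
      refine Finset.sum_congr rfl (fun k hk => ?_)
      rw [Finset.mem_range] at hk
      by_cases ho : Odd k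
      · rw [if_pos ho, if_pos ho, if_pos ho]
        by_cases hc : T - (j:ℕ) ≤ k
        · rw [if_pos hc, if_pos (by omega : T - k ≤ (j:ℕ)), odd_halves ho]
          ring
        · rw [if_neg hc, if_neg (by omega : ¬ (T - k ≤ (j:ℕ))), odd_halves ho]
          ring
      · rw [if_neg ho, if_neg ho, if_neg ho]
        split_ifs <;> ring
    rw [step3, Finset.sum_add_distrib,
      sum_ite_ge (fun k => if Odd k then (1/(T:ℝ) * (1 - (((T:ℝ)+1)^2/(4*(T:ℝ)^2) + ((T/2 : ℕ):ℝ)/T - (((T - (j:ℕ))/2 : ℕ):ℝ)/T) - ((k:ℝ) - ((T:ℝ) * (((T:ℝ)+1)^2/(4*(T:ℝ)^2) + ((T/2 : ℕ):ℝ)/T) - (((T+1)/2 : ℕ):ℝ) * ((T/2 : ℕ):ℝ)/T))/T)) else 0) (by omega : T - (j:ℕ) ≤ T)]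
    have lin : ∀ n : ℕ, ∑ k ∈ range n, (if Odd k then (1/(T:ℝ) * (1 - (((T:ℝ)+1)^2/(4*(T:ℝ)^2) + ((T/2 : ℕ):ℝ)/T - (((T - (j:ℕ))/2 : ℕ):ℝ)/T) - ((k:ℝ) - ((T:ℝ) * (((T:ℝ)+1)^2/(4*(T:ℝ)^2) + ((T/2 : ℕ):ℝ)/T) - (((T+1)/2 : ℕ):ℝ) * ((T/2 : ℕ):ℝ)/T))/T)) else 0)
        = (1/(T:ℝ) * (1 - (((T:ℝ)+1)^2/(4*(T:ℝ)^2) + ((T/2 : ℕ):ℝ)/T - (((T - (j:ℕ))/2 : ℕ):ℝ)/T) + ((T:ℝ) * (((T:ℝ)+1)^2/(4*(T:ℝ)^2) + ((T/2 : ℕ):ℝ)/T) - (((T+1)/2 : ℕ):ℝ) * ((T/2 : ℕ):ℝ)/T)/T)) * ((n/2 : ℕ):ℝ) + (-(1/(T:ℝ)^2)) * ((n/2 : ℕ):ℝ)^2 := by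
      intro n
      have pw : ∀ k : ℕ, (if Odd k then (1/(T:ℝ) * (1 - (((T:ℝ)+1)^2/(4*(T:ℝ)^2) + ((T/2 : ℕ):ℝ)/T - (((T - (j:ℕ))/2 : ℕ):ℝ)/T) - ((k:ℝ) - ((T:ℝ) * (((T:ℝ)+1)^2/(4*(T:ℝ)^2) + ((T/2 : ℕ):ℝ)/T) - (((T+1)/2 : ℕ):ℝ) * ((T/2 : ℕ):ℝ)/T))/T)) else 0)
          = (1/(T:ℝ) * (1 - (((T:ℝ)+1)^2/(4*(T:ℝ)^2) + ((T/2 : ℕ):ℝ)/T - (((T - (j:ℕ))/2 : ℕ):ℝ)/T) + ((T:ℝ) * (((T:ℝ)+1)^2/(4*(T:ℝ)^2) + ((T/2 : ℕ):ℝ)/T) - (((T+1)/2 : ℕ):ℝ) * ((T/2 : ℕ):ℝ)/T)/T)) * (if Odd k then (1:ℝ) else 0) + (-(1/(T:ℝ)^2)) * (if Odd k then (k:ℝ) else 0) := by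
        intro k; split_ifs <;> ring
      rw [Finset.sum_congr rfl (fun k _ => pw k), Finset.sum_add_distrib,
        ← Finset.mul_sum, ← Finset.mul_sum, oddsum1, oddsumk]
    have quad : ∑ k ∈ range T, (if Odd k then (-(1/(T:ℝ)^2) * ((k:ℝ) - ((k:ℝ) * (((T:ℝ)+1)^2/(4*(T:ℝ)^2) + ((T/2 : ℕ):ℝ)/T) - (((k:ℝ))^2 - 1)/4/T) - (k:ℝ) * ((k:ℝ) - ((T:ℝ) * (((T:ℝ)+1)^2/(4*(T:ℝ)^2) + ((T/2 : ℕ):ℝ)/T) - (((T+1)/2 : ℕ):ℝ) * ((T/2 : ℕ):ℝ)/T))/T)) else 0)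
        = (1/(4*(T:ℝ)^3)) * ((T/2 : ℕ):ℝ) + (-((1 - (((T:ℝ)+1)^2/(4*(T:ℝ)^2) + ((T/2 : ℕ):ℝ)/T) + ((T:ℝ) * (((T:ℝ)+1)^2/(4*(T:ℝ)^2) + ((T/2 : ℕ):ℝ)/T) - (((T+1)/2 : ℕ):ℝ) * ((T/2 : ℕ):ℝ)/T)/T)/(T:ℝ)^2)) * ((T/2 : ℕ):ℝ)^2
          + (3/(4*(T:ℝ)^3)) * (((T/2 : ℕ):ℝ) * (2*((T/2 : ℕ):ℝ) - 1) * (2*((T/2 : ℕ):ℝ) + 1) / 3) := by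
      have pw : ∀ k : ℕ, (if Odd k then (-(1/(T:ℝ)^2) * ((k:ℝ) - ((k:ℝ) * (((T:ℝ)+1)^2/(4*(T:ℝ)^2) + ((T/2 : ℕ):ℝ)/T) - (((k:ℝ))^2 - 1)/4/T) - (k:ℝ) * ((k:ℝ) - ((T:ℝ) * (((T:ℝ)+1)^2/(4*(T:ℝ)^2) + ((T/2 : ℕ):ℝ)/T) - (((T+1)/2 : ℕ):ℝ) * ((T/2 : ℕ):ℝ)/T))/T)) else 0)
          = (1/(4*(T:ℝ)^3)) * (if Odd k then (1:ℝ) else 0) + (-((1 - (((T:ℝ)+1)^2/(4*(T:ℝ)^2) + ((T/2 : ℕ):ℝ)/T) + ((T:ℝ) * (((T:ℝ)+1)^2/(4*(T:ℝ)^2) + ((T/2 : ℕ):ℝ)/T) - (((T+1)/2 : ℕ):ℝ) * ((T/2 : ℕ):ℝ)/T)/T)/(T:ℝ)^2)) * (if Odd k then (k:ℝ) else 0)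
            + (3/(4*(T:ℝ)^3)) * (if Odd k then ((k:ℝ))^2 else 0) := by
        intro k; split_ifs <;> ring
      rw [Finset.sum_congr rfl (fun k _ => pw k), Finset.sum_add_distrib,
        Finset.sum_add_distrib, ← Finset.mul_sum, ← Finset.mul_sum, ← Finset.mul_sum,
        oddsum1, oddsumk, oddsumk2]
    rw [lin T, lin (T - (j:ℕ)), quad]
    rw [if_pos (by omega : T - T ≤ (j:ℕ)),
      if_neg (by omega : ¬ (T - 0 ≤ (j:ℕ)))]
    rw [h12, hx]
    push_cast
    norm_num
    field_simp
    ring
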